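/- arXiv:1810.11711 — 2 statements merged into one kernel-verified Lean document; each statement's English description precedes it below -/
import Mathlib

section
/- For the logistic (sigmoid-activation) loss l(β; x, y) = y·xᵀβ − log(1 + exp(xᵀβ)) with y ∈ {0,1}, x, β ∈ ℝ^p and any λ ≥ 0, the minimum of l(β; x + η, y) over all η ∈ ℝ^p with ‖η‖_∞ ≤ λ is attained at η = −λ·sign(e)·sign(β) (componentwise sign of β), where e = y − (1 + exp(−xᵀβ))⁻¹ (equivalently sign(e) = 1 if y = 1 and sign(e) = −1 if y = 0), and the minimal value equals y·xᵀβ − y·λ·sign(e)·‖β‖₁ − log(1 + exp(xᵀβ − λ·sign(e)·‖β‖₁)). -/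
private lemma sgn_mul_self (b : ℝ) : Real.sign b * b = |b| := by
  rcases lt_trichotomy b 0 with h|h|h
  · rw [Real.sign_of_neg h, abs_of_neg h]; ring
  · simp [h]
  · rw [Real.sign_of_pos h, abs_of_pos h]; ring

private lemma abs_sign_le (b : ℝ) : |Real.sign b| ≤ 1 := by
  rcases lt_trichotomy b 0 with h|h|h
  · rw [Real.sign_of_neg h]; norm_num
  · simp [h]
  · rw [Real.sign_of_pos h]; norm_num

private lemma logistic_mono {u v : ℝ} (h : u ≤ v) :
    u - Real.log (1 + Real.exp u) ≤ v - Real.log (1 + Real.exp v) := by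
  have h1 : (1:ℝ) + Real.exp v ≤ Real.exp (v - u) * (1 + Real.exp u) := by
    have he : (1:ℝ) ≤ Real.exp (v - u) := Real.one_le_exp (by linarith)
    have hm : Real.exp (v - u) * Real.exp u = Real.exp v := by
      rw [← Real.exp_add]; ring_nf
    nlinarith [Real.exp_pos u, Real.exp_pos v]
  have h2 : Real.log (1 + Real.exp v) ≤ (v - u) + Real.log (1 + Real.exp u) := by
    calc Real.log (1 + Real.exp v) ≤ Real.log (Real.exp (v - u) * (1 + Real.exp u)) :=
          Real.log_le_log (by positivity) h1
      _ = (v - u) + Real.log (1 + Real.exp u) := by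
          rw [Real.log_mul (Real.exp_ne_zero _) (by positivity), Real.log_exp]
  linarith

private lemma log_one_add_exp_mono {u v : ℝ} (h : u ≤ v) :
    Real.log (1 + Real.exp u) ≤ Real.log (1 + Real.exp v) := by
  apply Real.log_le_log (by positivity)
  have := Real.exp_le_exp.2 h
  linarith
/-- **Closed form of the FGSM perturbation for the 1-layer sigmoid network.**
For the logistic loss `l(β; x, y) = y xᵀβ − log(1 + exp(xᵀβ))` with `y ∈ {0,1}` and any
`λ ≥ 0`, the minimum of `l(β; x + η, y)` over all `η` with `‖η‖_∞ ≤ λ` is attained at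
`η = −λ sign(e) sign(β)` (componentwise), where `e = y − (1 + exp(−xᵀβ))⁻¹`, and the minimal
value equals `y xᵀβ − y λ sign(e) ‖β‖₁ − log(1 + exp(xᵀβ − λ sign(e) ‖β‖₁))`. -/
theorem fgsm_perturbation_closed_form (p : ℕ) (x β : Fin p → ℝ) (y lam : ℝ)
    (hy : y = 0 ∨ y = 1) (hlam : 0 ≤ lam) :
    ∃ η : Fin p → ℝ,
      -- the maximal perturbation has the closed form −λ·sign(e)·sign(β)
      (η = fun j => -(lam * Real.sign (y - (1 + Real.exp (-(∑ j, x j * β j)))⁻¹)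
          * Real.sign (β j))) ∧
      -- it is feasible: ‖η‖_∞ ≤ λ
      (∀ j, |η j| ≤ lam) ∧
      -- it minimizes the perturbed loss over the ℓ∞-ball of radius λ
      (∀ η' : Fin p → ℝ, (∀ j, |η' j| ≤ lam) →
        y * (∑ j, (x j + η j) * β j) - Real.log (1 + Real.exp (∑ j, (x j + η j) * β j))
          ≤ y * (∑ j, (x j + η' j) * β j)
            - Real.log (1 + Real.exp (∑ j, (x j + η' j) * β j))) ∧
      -- and the minimal value has the announced closed form
      (y * (∑ j, (x j + η j) * β j) - Real.log (1 + Real.exp (∑ j, (x j + η j) * β j))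
        = y * (∑ j, x j * β j)
          - y * (lam * Real.sign (y - (1 + Real.exp (-(∑ j, x j * β j)))⁻¹)) * (∑ j, |β j|)
          - Real.log (1 + Real.exp ((∑ j, x j * β j)
              - lam * Real.sign (y - (1 + Real.exp (-(∑ j, x j * β j)))⁻¹)
                * (∑ j, |β j|)))) := by
  set t : ℝ := ∑ j, x j * β j with ht
  set s : ℝ := Real.sign (y - (1 + Real.exp (-t))⁻¹) with hsdef
  refine ⟨fun j => -(lam * s * Real.sign (β j)), rfl, ?_, ?_, ?_⟩
  case _ =>
    intro j
    have h1 := abs_sign_le (y - (1 + Real.exp (-t))⁻¹)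
    have h2 := abs_sign_le (β j)
    have : |(-(lam * s * Real.sign (β j)))| = lam * |s| * |Real.sign (β j)| := by
      rw [abs_neg, abs_mul, abs_mul, abs_of_nonneg hlam]
    rw [this]
    nlinarith [mul_le_mul h1 h2 (abs_nonneg _) (by norm_num : (0:ℝ) ≤ 1),
      abs_nonneg s, abs_nonneg (Real.sign (β j)), mul_nonneg (abs_nonneg s) (abs_nonneg (Real.sign (β j)))]
  all_goals {
    have hsum : ∀ c : ℝ, (∑ j, (x j + -(c * Real.sign (β j))) * β j)
        = t - c * ∑ j, |β j| := by
      intro c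
      have : ∀ j : Fin p, (x j + -(c * Real.sign (β j))) * β j
          = x j * β j - c * |β j| := by
        intro j
        have h := sgn_mul_self (β j)
        rw [← h]; ring
      rw [Finset.sum_congr rfl fun j _ => this j]
      rw [Finset.sum_sub_distrib, ← Finset.mul_sum]
    have hu0 : (∑ j, (x j + -(lam * s * Real.sign (β j))) * β j) = t - lam * s * ∑ j, |β j| :=
      hsum (lam * s)
    -- bound on arbitrary feasible η'
    have hbound : ∀ η' : Fin p → ℝ, (∀ j, |η' j| ≤ lam) →
        |(∑ j, (x j + η' j) * β j) - t| ≤ lam * ∑ j, |β j| := by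
      intro η' hη'
      have h1 : (∑ j, (x j + η' j) * β j) - t = ∑ j, η' j * β j := by
        rw [ht, ← Finset.sum_sub_distrib]
        congr 1; funext j; ring
      rw [h1]
      calc |∑ j, η' j * β j| ≤ ∑ j, |η' j * β j| := Finset.abs_sum_le_sum_abs _ _
        _ ≤ ∑ j, lam * |β j| := by
            apply Finset.sum_le_sum
            intro j _
            rw [abs_mul]
            exact mul_le_mul_of_nonneg_right (hη' j) (abs_nonneg _)
        _ = lam * ∑ j, |β j| := (Finset.mul_sum _ _ _).symm
    have habs : (0:ℝ) ≤ ∑ j, |β j| := Finset.sum_nonneg fun j _ => abs_nonneg _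
    rcases hy with hy | hy
    · -- y = 0 : s = -1
      subst hy
      have hs : s = -1 := by
        rw [hsdef]
        apply Real.sign_of_neg
        have : (0:ℝ) < (1 + Real.exp (-t))⁻¹ := by positivity
        linarith
      first
      | { -- minimality
          intro η' hη'
          have hb := hbound η' hη'
          have h2 : (∑ j, (x j + η' j) * β j) ≤ t + lam * ∑ j, |β j| := by
            have := abs_le.1 hb; linarith [this.2]
          rw [hu0, hs]
          have h3 : t - lam * (-1) * ∑ j, |β j| = t + lam * ∑ j, |β j| := by ring
          rw [h3]
          simp only [zero_mul, zero_sub, neg_le_neg_iff]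
          exact log_one_add_exp_mono h2 }
      | { -- closed form
          rw [hu0, hs]; ring_nf }
    · -- y = 1 : s = 1
      subst hy
      have hs : s = 1 := by
        rw [hsdef]
        apply Real.sign_of_pos
        have h0 : (0:ℝ) < 1 + Real.exp (-t) := by positivity
        have h1 : (1 + Real.exp (-t))⁻¹ * (1 + Real.exp (-t)) = 1 :=
          inv_mul_cancel₀ (ne_of_gt h0)
        nlinarith [Real.exp_pos (-t), inv_pos.2 h0]
      first
      | { intro η' hη'
          have hb := hbound η' hη'
          have h2 : t - lam * ∑ j, |β j| ≤ ∑ j, (x j + η' j) * β j := by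
            have := abs_le.1 hb; linarith [this.1]
          rw [hu0, hs]
          simp only [one_mul, mul_one]
          exact logistic_mono (by linarith)
        }
      | { rw [hu0, hs]; ring_nf }
  }
end

section
/- In the logistic model, for any u ∈ ℝ^p and r > 0, E[|Xᵀu|·1{|ε| ≤ r·|Xᵀu|}] ≤ 2r·‖u‖²·E[‖X‖²·(1 + exp(|Xᵀβ₀|))]. In particular, if E[‖X‖²·(1 + exp(|Xᵀβ₀|))] < ∞, then |E[Xᵀu·(1{0 ≤ ε ≤ r·Xᵀu} − 1{r·Xᵀu ≤ ε ≤ 0})]| = O(r) as r → 0, uniformly over ‖u‖ = C for any fixed C > 0. -/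
open MeasureTheory ProbabilityTheory

noncomputable section

/-- Euclidean dot product `xᵀy`. -/
def dot {p : ℕ} (x y : EuclideanSpace ℝ (Fin p)) : ℝ := ∑ j, x j * y j

lemma abs_dot_le {p : ℕ} (x u : EuclideanSpace ℝ (Fin p)) : |dot x u| ≤ ‖x‖ * ‖u‖ := by
  have h : dot x u = @inner ℝ _ _ x u := by
    simp [dot, PiLp.inner_apply, RCLike.inner_apply, mul_comm]
  rw [h]
  exact abs_real_inner_le_norm x u

lemma eps_lower (θ y : ℝ) (hy : y = 0 ∨ y = 1) :
    (1 + Real.exp |θ|)⁻¹ ≤ |y - (1 + Real.exp (-θ))⁻¹| := by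
  have h1 : (0:ℝ) < 1 + Real.exp (-θ) := by positivity
  have h2 : (0:ℝ) < 1 + Real.exp θ := by positivity
  rcases hy with h | h <;> subst h
  · have habs : |(0:ℝ) - (1 + Real.exp (-θ))⁻¹| = (1 + Real.exp (-θ))⁻¹ := by
      rw [zero_sub, abs_neg, abs_of_pos (show (0:ℝ) < (1 + Real.exp (-θ))⁻¹ by positivity)]
    rw [habs]
    apply inv_anti₀ h1
    have : Real.exp (-θ) ≤ Real.exp |θ| := Real.exp_le_exp.mpr (neg_le_abs θ)
    linarith
  · have key : (1:ℝ) - (1 + Real.exp (-θ))⁻¹ = (1 + Real.exp θ)⁻¹ := by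
      have hee : Real.exp (-θ) * Real.exp θ = 1 := by
        rw [← Real.exp_add]; simp
      field_simp
      nlinarith [hee]
    have habs : |(1:ℝ) - (1 + Real.exp (-θ))⁻¹| = (1 + Real.exp θ)⁻¹ := by
      rw [key, abs_of_pos (show (0:ℝ) < (1 + Real.exp θ)⁻¹ by positivity)]
    rw [habs]
    apply inv_anti₀ h2
    have : Real.exp θ ≤ Real.exp |θ| := Real.exp_le_exp.mpr (le_abs_self θ)
    linarith

/-- **Verification of sign condition (10) for the logistic model.**
With `ε = Y − (1 + exp(−Xᵀβ₀))⁻¹`, for all `u` and `r > 0`,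
`E[|Xᵀu| 1{|ε| ≤ r|Xᵀu|}] ≤ 2r‖u‖² E[‖X‖²(1 + exp|Xᵀβ₀|)]`; in particular, if this
expectation is finite, `|E[Xᵀu(1{0 ≤ ε ≤ rXᵀu} − 1{rXᵀu ≤ ε ≤ 0})]| = O(r)` uniformly over
`‖u‖ = C`. -/
theorem logistic_sign_condition_x
    (p : ℕ) {Ω : Type*} [MeasurableSpace Ω] (μ : Measure Ω) [IsProbabilityMeasure μ]
    (X : Ω → EuclideanSpace ℝ (Fin p)) (Y : Ω → ℝ)
    (hXm : Measurable X) (hYm : Measurable Y)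
    -- Y ∈ {0,1} and, given X, Y is Bernoulli with success probability (1+exp(−Xᵀβ₀))⁻¹
    (hY01 : ∀ ω, Y ω = 0 ∨ Y ω = 1)
    (β₀ : EuclideanSpace ℝ (Fin p))
    (hcond : μ[Y | MeasurableSpace.comap X inferInstance]
      =ᵐ[μ] fun ω => (1 + Real.exp (-(dot (X ω) β₀)))⁻¹)
    (hint : Integrable (fun ω => ‖X ω‖ ^ 2 * (1 + Real.exp |dot (X ω) β₀|)) μ) :
    (∀ (u : EuclideanSpace ℝ (Fin p)) (r : ℝ), 0 < r →
      (∫ ω, (if |Y ω - (1 + Real.exp (-(dot (X ω) β₀)))⁻¹|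
              ≤ r * |dot (X ω) u| then |dot (X ω) u| else 0) ∂μ)
        ≤ 2 * r * ‖u‖ ^ 2 * ∫ ω, ‖X ω‖ ^ 2 * (1 + Real.exp |dot (X ω) β₀|) ∂μ)
    ∧
    (∀ C : ℝ, 0 < C → ∃ c : ℝ, ∀ r : ℝ, 0 < r →
      ∀ u : EuclideanSpace ℝ (Fin p), ‖u‖ = C →
        |∫ ω, dot (X ω) u
            * ((if 0 ≤ Y ω - (1 + Real.exp (-(dot (X ω) β₀)))⁻¹
                  ∧ Y ω - (1 + Real.exp (-(dot (X ω) β₀)))⁻¹ ≤ r * dot (X ω) u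
                then (1:ℝ) else 0)
              - (if r * dot (X ω) u ≤ Y ω - (1 + Real.exp (-(dot (X ω) β₀)))⁻¹
                  ∧ Y ω - (1 + Real.exp (-(dot (X ω) β₀)))⁻¹ ≤ 0
                then (1:ℝ) else 0)) ∂μ|
          ≤ c * r) := by
  set I : ℝ := ∫ ω, ‖X ω‖ ^ 2 * (1 + Real.exp |dot (X ω) β₀|) ∂μ with hI
  have hInn : 0 ≤ I := integral_nonneg fun ω => by positivity
  -- key pointwise bound
  have hpt : ∀ (u : EuclideanSpace ℝ (Fin p)) (r : ℝ), 0 < r → ∀ ω : Ω,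
      |Y ω - (1 + Real.exp (-(dot (X ω) β₀)))⁻¹| ≤ r * |dot (X ω) u| →
      |dot (X ω) u| ≤ r * ‖u‖ ^ 2 * (‖X ω‖ ^ 2 * (1 + Real.exp |dot (X ω) β₀|)) := by
    intro u r hr ω h
    set E := Real.exp |dot (X ω) β₀| with hE
    have hEpos : (0:ℝ) < 1 + E := by positivity
    have hlow := eps_lower (dot (X ω) β₀) (Y ω) (hY01 ω)
    have h1 : (1 + E)⁻¹ ≤ r * |dot (X ω) u| := le_trans hlow h
    have h2 : 1 ≤ r * |dot (X ω) u| * (1 + E) := by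
      rw [inv_le_iff_one_le_mul₀ hEpos] at h1
      linarith [h1]
    have hcs := abs_dot_le (X ω) u
    have hXn : (0:ℝ) ≤ ‖X ω‖ := norm_nonneg _
    have hun : (0:ℝ) ≤ ‖u‖ := norm_nonneg _
    have habs : (0:ℝ) ≤ |dot (X ω) u| := abs_nonneg _
    nlinarith [mul_le_mul hcs hcs habs (by positivity : (0:ℝ) ≤ ‖X ω‖ * ‖u‖),
      mul_le_mul_of_nonneg_left h2 habs, mul_pos hr hEpos]
  have hg : ∀ (u : EuclideanSpace ℝ (Fin p)) (r : ℝ),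
      Integrable (fun ω => r * ‖u‖ ^ 2 * (‖X ω‖ ^ 2 * (1 + Real.exp |dot (X ω) β₀|))) μ :=
    fun u r => hint.const_mul _
  have part1 : ∀ (u : EuclideanSpace ℝ (Fin p)) (r : ℝ), 0 < r →
      (∫ ω, (if |Y ω - (1 + Real.exp (-(dot (X ω) β₀)))⁻¹|
              ≤ r * |dot (X ω) u| then |dot (X ω) u| else 0) ∂μ)
        ≤ 2 * r * ‖u‖ ^ 2 * I := by
    intro u r hr
    have hle : (∫ ω, (if |Y ω - (1 + Real.exp (-(dot (X ω) β₀)))⁻¹|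
              ≤ r * |dot (X ω) u| then |dot (X ω) u| else 0) ∂μ)
        ≤ ∫ ω, r * ‖u‖ ^ 2 * (‖X ω‖ ^ 2 * (1 + Real.exp |dot (X ω) β₀|)) ∂μ := by
      apply integral_mono_of_nonneg
      · filter_upwards with ω
        by_cases h : |Y ω - (1 + Real.exp (-(dot (X ω) β₀)))⁻¹| ≤ r * |dot (X ω) u|
        · simp [h, abs_nonneg]
        · simp [h]
      · exact hg u r
      · filter_upwards with ω
        by_cases h : |Y ω - (1 + Real.exp (-(dot (X ω) β₀)))⁻¹| ≤ r * |dot (X ω) u|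
        · simpa [h] using hpt u r hr ω h
        · simp only [h, if_false]
          positivity
    rw [integral_const_mul] at hle
    nlinarith [mul_nonneg (mul_nonneg hr.le (sq_nonneg ‖u‖)) hInn]
  refine ⟨part1, ?_⟩
  intro C hC
  refine ⟨2 * C ^ 2 * I, fun r hr u hu => ?_⟩
  calc |∫ ω, dot (X ω) u
            * ((if 0 ≤ Y ω - (1 + Real.exp (-(dot (X ω) β₀)))⁻¹
                  ∧ Y ω - (1 + Real.exp (-(dot (X ω) β₀)))⁻¹ ≤ r * dot (X ω) u
                then (1:ℝ) else 0)
              - (if r * dot (X ω) u ≤ Y ω - (1 + Real.exp (-(dot (X ω) β₀)))⁻¹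
                  ∧ Y ω - (1 + Real.exp (-(dot (X ω) β₀)))⁻¹ ≤ 0
                then (1:ℝ) else 0)) ∂μ|
      ≤ ∫ ω, r * ‖u‖ ^ 2 * (‖X ω‖ ^ 2 * (1 + Real.exp |dot (X ω) β₀|)) ∂μ := by
        have habs0 := norm_integral_le_integral_norm (μ := μ)
            (fun ω => dot (X ω) u
            * ((if 0 ≤ Y ω - (1 + Real.exp (-(dot (X ω) β₀)))⁻¹
                  ∧ Y ω - (1 + Real.exp (-(dot (X ω) β₀)))⁻¹ ≤ r * dot (X ω) u
                then (1:ℝ) else 0)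
              - (if r * dot (X ω) u ≤ Y ω - (1 + Real.exp (-(dot (X ω) β₀)))⁻¹
                  ∧ Y ω - (1 + Real.exp (-(dot (X ω) β₀)))⁻¹ ≤ 0
                then (1:ℝ) else 0)))
        simp only [Real.norm_eq_abs] at habs0
        refine le_trans habs0 ?_
        apply integral_mono_of_nonneg
        · filter_upwards with ω; positivity
        · exact hg u r
        · filter_upwards with ω
          set t := dot (X ω) u with ht
          set e := Y ω - (1 + Real.exp (-(dot (X ω) β₀)))⁻¹ with he
          by_cases h1 : 0 ≤ e ∧ e ≤ r * t <;> by_cases h2 : r * t ≤ e ∧ e ≤ 0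
          · have he0 : e = 0 := le_antisymm h2.2 h1.1
            simp only [h1, h2, if_true, sub_self, mul_zero, abs_zero]
            positivity
          · have habs : |e| ≤ r * |t| := by
              rw [abs_of_nonneg h1.1]
              refine le_trans h1.2 ?_
              have h3 : t ≤ |t| := le_abs_self t
              nlinarith
            have hb := hpt u r hr ω (by simpa [he, ht] using habs)
            simp only [h1, h2, if_true, if_false, sub_zero, mul_one, abs_mul]
            calc |t| * |(1:ℝ)| = |t| := by simp
              _ ≤ _ := hb
          · have habs : |e| ≤ r * |t| := by
              rw [abs_of_nonpos h2.2]
              have h3 : r * t ≤ e := h2.1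
              have h4 : -t ≤ |t| := neg_le_abs t
              nlinarith
            have hb := hpt u r hr ω (by simpa [he, ht] using habs)
            simp only [h1, h2, if_true, if_false, zero_sub, mul_neg, abs_neg, mul_one, abs_mul]
            calc |t| * |(1:ℝ)| = |t| := by simp
              _ ≤ _ := hb
          · simp only [h1, h2, if_false, sub_zero, mul_zero, abs_zero]
            positivity
    _ = r * ‖u‖ ^ 2 * I := by rw [integral_const_mul]
    _ ≤ 2 * C ^ 2 * I * r := by rw [hu]; nlinarith [mul_nonneg (sq_nonneg C) hInn]
end
end
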